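/- arXiv:1912.02030 — 2 statements merged into one kernel-verified Lean document; each statement's English description precedes it below -/
import Mathlib

section
/- Let n, m, p, r ∈ ℕ with r ≥ 1, let A ∈ ℝ^{n×n}, C ∈ ℝ^{p×n}, and let G : ℝ → ℝ^{n×m} be smooth with C A^k G(t) = 0 for all k = 0, …, r−2 and all t ∈ ℝ, and suppose that C A^{r−1} G(t) ∈ ℝ^{p×m} has rank p for every t ∈ ℝ. Then for every t ∈ ℝ the matrix 𝒞ℬ(t) ∈ ℝ^{rp×rm} has rank rp (equivalently, 𝒞ℬ(t)(𝒞ℬ(t))ᵀ is invertible), and consequently the matrix 𝒞 ∈ ℝ^{rp×n} has rank rp. -/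
open Matrix
open scoped ContDiff

/-- Entrywise derivative of a matrix-valued function. -/
noncomputable def matDeriv {a b : ℕ} (M : ℝ → Matrix (Fin a) (Fin b) ℝ) :
    ℝ → Matrix (Fin a) (Fin b) ℝ :=
  fun t => Matrix.of fun i j => deriv (fun s => M s i j) t

/-- The operator `(D_A M)(t) = M'(t) - A · M(t)`. -/
noncomputable def DA {n k : ℕ} (A : Matrix (Fin n) (Fin n) ℝ)
    (M : ℝ → Matrix (Fin n) (Fin k) ℝ) : ℝ → Matrix (Fin n) (Fin k) ℝ :=
  fun t => matDeriv M t - A * M t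

/-- `ℬ(t) = [G(t), (D_A G)(t), …, (D_A^{r−1} G)(t)]`, block column `j` is `(D_A^j G)(t)`. -/
noncomputable def calB {n m : ℕ} (r : ℕ) (A : Matrix (Fin n) (Fin n) ℝ)
    (G : ℝ → Matrix (Fin n) (Fin m) ℝ) (t : ℝ) : Matrix (Fin n) (Fin r × Fin m) ℝ :=
  Matrix.of fun i jq => ((DA A)^[(jq.1 : ℕ)] G t) i jq.2

/-- `𝒞 = [Cᵀ, (CA)ᵀ, …, (CA^{r−1})ᵀ]ᵀ`, block row `i` is `C A^i`. -/
def calC {n p : ℕ} (r : ℕ) (A : Matrix (Fin n) (Fin n) ℝ) (C : Matrix (Fin p) (Fin n) ℝ) :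
    Matrix (Fin r × Fin p) (Fin n) ℝ :=
  Matrix.of fun iq j => (C * A ^ (iq.1 : ℕ)) iq.2 j

lemma contDiff_iter {n m : ℕ} (A : Matrix (Fin n) (Fin n) ℝ)
    (G : ℝ → Matrix (Fin n) (Fin m) ℝ)
    (hG : ∀ i j, ContDiff ℝ (⊤ : ℕ∞) fun t => G t i j) :
    ∀ k, ∀ i j, ContDiff ℝ ∞ fun t => ((DA A)^[k] G) t i j := by
  intro k
  induction k with
  | zero => exact fun i j => (hG i j).of_le (by simp)
  | succ k ih =>
    intro i j
    rw [Function.iterate_succ_apply']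
    have h1 : ContDiff ℝ ∞ fun t => deriv (fun s => ((DA A)^[k] G) s i j) t :=
      ((contDiff_infty_iff_deriv).mp (ih i j)).2
    have h2 : ContDiff ℝ ∞ fun t => ∑ l, A i l * ((DA A)^[k] G) t l j :=
      ContDiff.sum fun l _ => contDiff_const.mul (ih l j)
    simpa [DA, matDeriv, Matrix.sub_apply, Matrix.mul_apply] using h1.sub h2

lemma mul_matDeriv {n k q : ℕ} (B : Matrix (Fin q) (Fin n) ℝ)
    (M : ℝ → Matrix (Fin n) (Fin k) ℝ)
    (hM : ∀ i j, Differentiable ℝ fun t => M t i j) (t : ℝ) :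
    B * matDeriv M t = matDeriv (fun s => B * M s) t := by
  ext i j
  simp only [matDeriv, Matrix.mul_apply, Matrix.of_apply]
  rw [deriv_fun_sum (fun l _ => ((hM l j) t).const_mul (B i l))]
  exact Finset.sum_congr rfl fun l _ => (deriv_const_mul (B i l) ((hM l j) t)).symm

lemma F_succ {n m p : ℕ} (A : Matrix (Fin n) (Fin n) ℝ) (C : Matrix (Fin p) (Fin n) ℝ)
    (G : ℝ → Matrix (Fin n) (Fin m) ℝ)
    (hG : ∀ i j, ContDiff ℝ (⊤ : ℕ∞) fun t => G t i j) (i j : ℕ) (t : ℝ) :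
    C * A ^ i * ((DA A)^[j+1] G t) =
      matDeriv (fun s => C * A ^ i * ((DA A)^[j] G s)) t
        - C * A ^ (i+1) * ((DA A)^[j] G t) := by
  have hd : ∀ a b, Differentiable ℝ fun s => ((DA A)^[j] G) s a b := fun a b =>
    (contDiff_iter A G hG j a b).differentiable (by simp)
  rw [Function.iterate_succ_apply']
  show C * A ^ i * (matDeriv ((DA A)^[j] G) t - A * (DA A)^[j] G t) = _
  rw [Matrix.mul_sub, mul_matDeriv _ _ hd, pow_succ, Matrix.mul_assoc C, Matrix.mul_assoc C, Matrix.mul_assoc]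

lemma matDeriv_of_zero {a b : ℕ} (M : ℝ → Matrix (Fin a) (Fin b) ℝ)
    (h : ∀ s, M s = 0) (t : ℝ) : matDeriv M t = 0 := by
  ext i j
  simp [matDeriv, funext h, Matrix.zero_apply]

lemma hzero {n m p r : ℕ}
    (A : Matrix (Fin n) (Fin n) ℝ) (C : Matrix (Fin p) (Fin n) ℝ)
    (G : ℝ → Matrix (Fin n) (Fin m) ℝ)
    (hG : ∀ i j, ContDiff ℝ (⊤ : ℕ∞) fun t => G t i j)
    (hCAG : ∀ k : ℕ, k + 2 ≤ r → ∀ t : ℝ, C * A ^ k * G t = 0) :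
    ∀ j i : ℕ, i + j + 2 ≤ r → ∀ t : ℝ, C * A ^ i * ((DA A)^[j] G t) = 0 := by
  intro j
  induction j with
  | zero => exact fun i h t => hCAG i (by omega) t
  | succ j ih =>
    intro i h t
    rw [F_succ A C G hG,
      matDeriv_of_zero _ (fun s => ih i (by omega) s) t,
      ih (i+1) (by omega) t, sub_zero]

lemma hanti {n m p r : ℕ}
    (A : Matrix (Fin n) (Fin n) ℝ) (C : Matrix (Fin p) (Fin n) ℝ)
    (G : ℝ → Matrix (Fin n) (Fin m) ℝ)
    (hG : ∀ i j, ContDiff ℝ (⊤ : ℕ∞) fun t => G t i j)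
    (hCAG : ∀ k : ℕ, k + 2 ≤ r → ∀ t : ℝ, C * A ^ k * G t = 0) :
    ∀ j i : ℕ, i + j + 1 = r → ∀ t : ℝ,
      C * A ^ i * ((DA A)^[j] G t) = ((-1 : ℝ))^j • (C * A ^ (r-1) * G t) := by
  intro j
  induction j with
  | zero =>
    intro i h t
    obtain rfl : i = r - 1 := by omega
    simp
  | succ j ih =>
    intro i h t
    rw [F_succ A C G hG,
      matDeriv_of_zero _ (fun s => hzero A C G hG hCAG j i (by omega) s) t,
      ih (i+1) (by omega) t, zero_sub, ← neg_smul]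
    congr 1
    ring

lemma vecMul_eq_zero_iff_of_rank {p m : ℕ} (Γ : Matrix (Fin p) (Fin m) ℝ)
    (h : Γ.rank = p) {x : Fin p → ℝ} (hx : x ᵥ* Γ = 0) : x = 0 := by
  have h1 : Γᵀ.rank = p := by rw [Matrix.rank_transpose]; exact h
  have h2 : LinearMap.ker Γᵀ.mulVecLin = ⊥ := by
    have h3 := LinearMap.finrank_range_add_finrank_ker Γᵀ.mulVecLin
    rw [Module.finrank_pi, Fintype.card_fin] at h3
    rw [Matrix.rank] at h1
    rw [← Submodule.finrank_eq_zero (R := ℝ)]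
    omega
  have h4 : Γᵀ.mulVecLin x = 0 := by
    rw [Matrix.mulVecLin_apply, Matrix.mulVec_transpose, hx]
  have := LinearMap.ker_eq_bot.mp h2
  exact this (by rw [h4, map_zero])
theorem stmt1 (n m p r : ℕ) (hr : 1 ≤ r)
    (A : Matrix (Fin n) (Fin n) ℝ) (C : Matrix (Fin p) (Fin n) ℝ)
    (G : ℝ → Matrix (Fin n) (Fin m) ℝ)
    (hG : ∀ i j, ContDiff ℝ (⊤ : ℕ∞) fun t => G t i j)
    (hCAG : ∀ k : ℕ, k + 2 ≤ r → ∀ t : ℝ, C * A ^ k * G t = 0)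
    (hΓ : ∀ t : ℝ, (C * A ^ (r - 1) * G t).rank = p) :
    (∀ t : ℝ, (calC r A C * calB r A G t).rank = r * p ∧
      IsUnit (calC r A C * calB r A G t * (calC r A C * calB r A G t)ᵀ)) ∧
    (calC r A C).rank = r * p := by
  have entry : ∀ (t : ℝ) (i j : Fin r) (q : Fin p) (q' : Fin m),
      (calC r A C * calB r A G t) (i, q) (j, q') =
        (C * A ^ (i : ℕ) * ((DA A)^[(j : ℕ)] G t)) q q' := by
    intro t i j q q'
    simp [calC, calB, Matrix.mul_apply]
  -- core: any left null vector is zero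
  have hrows : ∀ (t : ℝ) (x : Fin r × Fin p → ℝ),
      x ᵥ* (calC r A C * calB r A G t) = 0 → x = 0 := by
    intro t x hx
    have key : ∀ d : ℕ, ∀ i : Fin r, (i : ℕ) + d + 1 = r → ∀ q, x (i, q) = 0 := by
      intro d
      induction d using Nat.strong_induction_on with
      | _ d ih =>
        intro i hi
        have hd : d < r := by omega
        set j : Fin r := ⟨d, hd⟩ with hjdef
        have hy : (fun q => x (i, q)) ᵥ* (C * A ^ (r - 1) * G t) = 0 := by
          ext q'
          have h0 := congrFun hx (j, q')
          simp only [Matrix.vecMul, dotProduct, Fintype.sum_prod_type,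
            Pi.zero_apply] at h0
          rw [Finset.sum_eq_single i] at h0
          · have h1 : ∀ q : Fin p,
                x (i, q) * (calC r A C * calB r A G t) (i, q) (j, q')
                  = (-1 : ℝ)^d * (x (i, q) * (C * A ^ (r - 1) * G t) q q') := by
              intro q
              rw [entry, hanti A C G hG hCAG d (i : ℕ) (by omega) t]
              simp only [Matrix.smul_apply, smul_eq_mul]
              ring
            rw [Finset.sum_congr rfl (fun q _ => h1 q), ← Finset.mul_sum] at h0
            have h2 : ((-1 : ℝ))^d ≠ 0 := pow_ne_zero _ (by norm_num)
            have h3 := (mul_eq_zero.mp h0).resolve_left h2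
            simpa [Matrix.vecMul, dotProduct] using h3
          · intro i' _ hne
            rcases Nat.lt_or_ge (i' : ℕ) (i : ℕ) with hlt | hge
            · apply Finset.sum_eq_zero
              intro q _
              rw [entry, hzero A C G hG hCAG d (i' : ℕ) (by omega) t]
              simp
            · have hgt : (i : ℕ) < (i' : ℕ) := by
                rcases Nat.lt_or_ge (i : ℕ) (i' : ℕ) with h | h
                · exact h
                · exact absurd (Fin.ext (by omega)) hne
              apply Finset.sum_eq_zero
              intro q _
              rw [ih (r - 1 - (i' : ℕ)) (by omega) i' (by omega) q, zero_mul]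
          · intro hmem
            exact absurd (Finset.mem_univ i) hmem
        have h4 := vecMul_eq_zero_iff_of_rank _ (hΓ t) hy
        intro q
        exact congrFun h4 q
    ext ⟨i, q⟩
    exact key (r - 1 - (i : ℕ)) i (by omega) q
  have hli : ∀ t : ℝ, LinearIndependent ℝ (fun iq => (calC r A C * calB r A G t) iq) := by
    intro t
    rw [show (fun iq => (calC r A C * calB r A G t) iq) = (calC r A C * calB r A G t).row from rfl,
      ← Matrix.vecMul_injective_iff]
    intro a b hab
    dsimp only at hab
    have : (a - b) ᵥ* (calC r A C * calB r A G t) = 0 := by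
      rw [Matrix.sub_vecMul, hab, sub_self]
    have := hrows t (a - b) this
    exact sub_eq_zero.mp this
  have hcard : Fintype.card (Fin r × Fin p) = r * p := by
    simp [Fintype.card_prod]
  have hrank : ∀ t : ℝ, (calC r A C * calB r A G t).rank = r * p := by
    intro t
    rw [(hli t).rank_matrix, hcard]
  refine ⟨fun t => ⟨hrank t, ?_⟩, ?_⟩
  · rw [← Matrix.vecMul_injective_iff_isUnit]
    intro a b hab
    dsimp only at hab
    have hsub : (a - b) ᵥ* (calC r A C * calB r A G t * (calC r A C * calB r A G t)ᵀ) = 0 := by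
      rw [Matrix.sub_vecMul, hab, sub_self]
    set M := calC r A C * calB r A G t with hM
    set u := (a - b) ᵥ* M with hu
    have h5 : u ⬝ᵥ u = 0 := by
      have h6 : (a - b) ᵥ* (M * Mᵀ) = u ᵥ* Mᵀ := by
        rw [hu, Matrix.vecMul_vecMul]
      have h7 : ((a - b) ᵥ* (M * Mᵀ)) ⬝ᵥ (a - b) = 0 := by
        rw [hsub]; simp
      rw [h6] at h7
      calc u ⬝ᵥ u = u ⬝ᵥ (Mᵀ *ᵥ (a - b)) := by rw [Matrix.mulVec_transpose]
        _ = (u ᵥ* Mᵀ) ⬝ᵥ (a - b) := Matrix.dotProduct_mulVec u Mᵀ (a - b)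
        _ = 0 := h7
    have h8 : u = 0 := dotProduct_self_eq_zero.mp h5
    have h9 := hrows t (a - b) h8
    exact sub_eq_zero.mp h9
  · refine le_antisymm ?_ ?_
    · have := Matrix.rank_le_card_height (calC r A C)
      rwa [hcard] at this
    · have h10 := Matrix.rank_mul_le_left (calC r A C) (calB r A G 0)
      rw [hrank 0] at h10
      exact h10
end

section
/- Let n, m, p, r ∈ ℕ with r ≥ 1, let A ∈ ℝ^{n×n}, C ∈ ℝ^{p×n}, let W : ℝ → ℝ^{n×p} and R₁ : ℝ → ℝ^{m×p} be smooth with R₁(t)ᵀ R₁(t) = I_p for all t, and set G(t) := W(t) R₁(t)ᵀ. Assume that C A^k W(t) = 0 for all k = 0, …, r−2 and all t, and that C A^{r−1} W(t) ∈ ℝ^{p×p} is invertible for all t. Then for every t ∈ ℝ the matrix 𝒞ℬ(t)(𝒞ℬ(t))ᵀ is invertible and ℬ(t) (𝒞ℬ(t))† 𝒞 ℬ(t) = ℬ(t), where (𝒞ℬ(t))† := (𝒞ℬ(t))ᵀ (𝒞ℬ(t)(𝒞ℬ(t))ᵀ)⁻¹. -/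
open Matrix

open Finset

notation "SM" => ((⊤:ℕ∞) : WithTop ℕ∞)

lemma matDeriv_apply {a b : ℕ} (M : ℝ → Matrix (Fin a) (Fin b) ℝ) (t : ℝ) (i j) :
    matDeriv M t i j = deriv (fun s => M s i j) t := rfl

/-- entries of DA-iterates are smooth -/
lemma smooth_DA_iter {n k : ℕ} (A : Matrix (Fin n) (Fin n) ℝ)
    (M : ℝ → Matrix (Fin n) (Fin k) ℝ) (hM : ∀ i j, ContDiff ℝ SM fun t => M t i j) :
    ∀ jj : ℕ, ∀ i j, ContDiff ℝ SM fun t => ((DA A)^[jj] M t) i j := by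
  intro jj
  induction jj with
  | zero => simpa using hM
  | succ jj ih =>
    intro i j
    have : (fun t => ((DA A)^[jj+1] M t) i j)
        = fun t => deriv (fun s => ((DA A)^[jj] M s) i j) t
            - ∑ x, A i x * ((DA A)^[jj] M t) x j := by
      funext t
      rw [Function.iterate_succ_apply']
      simp [DA, Matrix.sub_apply, matDeriv_apply, Matrix.mul_apply]
    rw [this]
    exact ((contDiff_infty_iff_deriv.mp (ih i j)).2).sub
      (ContDiff.sum fun x _ => (contDiff_const.mul (ih x j)))

lemma diffAt_DA_iter {n k : ℕ} (A : Matrix (Fin n) (Fin n) ℝ)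
    (M : ℝ → Matrix (Fin n) (Fin k) ℝ) (hM : ∀ i j, ContDiff ℝ SM fun t => M t i j)
    (jj : ℕ) (i j) (t : ℝ) : DifferentiableAt ℝ (fun t => ((DA A)^[jj] M t) i j) t :=
  ((smooth_DA_iter A M hM jj i j).differentiable (by simp)).differentiableAt

/-- constant left multiplication commutes with matDeriv -/
lemma const_mul_matDeriv {a b c : ℕ} (Cm : Matrix (Fin a) (Fin b) ℝ)
    (M : ℝ → Matrix (Fin b) (Fin c) ℝ) (t : ℝ)
    (hM : ∀ i j, DifferentiableAt ℝ (fun t => M t i j) t) :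
    Cm * matDeriv M t = matDeriv (fun s => Cm * M s) t := by
  ext i j
  simp only [Matrix.mul_apply, matDeriv_apply]
  rw [deriv_fun_sum (fun x _ => (hM x j).const_mul _)]
  simp [deriv_const_mul _ (hM _ j)]

lemma matDeriv_zero_fun {a b : ℕ} (t : ℝ) :
    matDeriv (fun _ : ℝ => (0 : Matrix (Fin a) (Fin b) ℝ)) t = 0 := by
  ext i j; simp [matDeriv_apply]

/-- Key vanishing / antidiagonal lemma -/
lemma PQ {n p q r : ℕ} (A : Matrix (Fin n) (Fin n) ℝ) (C : Matrix (Fin p) (Fin n) ℝ)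
    (F : ℝ → Matrix (Fin n) (Fin q) ℝ)
    (hF : ∀ i j, ContDiff ℝ SM fun t => F t i j)
    (hCF : ∀ k : ℕ, k + 2 ≤ r → ∀ t, C * A ^ k * F t = 0) :
    ∀ j i : ℕ, (i + j + 2 ≤ r → ∀ t, C * A ^ i * ((DA A)^[j] F t) = 0)
      ∧ (i + j + 1 = r → ∀ t,
          C * A ^ i * ((DA A)^[j] F t) = ((-1:ℝ)^j) • (C * A ^ (r-1) * F t)) := by
  intro j
  induction j with
  | zero =>
    intro i
    refine ⟨fun h t => hCF i h t, fun h t => ?_⟩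
    simp only [Function.iterate_zero, id_eq, pow_zero, one_smul]
    have hi : i = r - 1 := by omega
    rw [hi]
  | succ j ih =>
    intro i
    have key : ∀ t, C * A ^ i * ((DA A)^[j+1] F t)
        = matDeriv (fun s => C * A ^ i * ((DA A)^[j] F s)) t
          - C * A ^ (i+1) * ((DA A)^[j] F t) := by
      intro t
      rw [Function.iterate_succ_apply']
      show C * A ^ i * (matDeriv ((DA A)^[j] F) t - A * ((DA A)^[j] F t)) = _
      rw [Matrix.mul_sub, const_mul_matDeriv _ _ t (fun a b => diffAt_DA_iter A F hF j a b t)]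
      congr 1
      rw [show C * A ^ (i+1) = C * A ^ i * A by rw [pow_succ, ← Matrix.mul_assoc],
        Matrix.mul_assoc, Matrix.mul_assoc, Matrix.mul_assoc]
    constructor
    · intro h t
      rw [key t]
      have h1 : (fun s => C * A ^ i * ((DA A)^[j] F s)) = fun _ => 0 := by
        funext s; exact (ih i).1 (by omega) s
      rw [h1, matDeriv_zero_fun, (ih (i+1)).1 (by omega) t, sub_zero]
    · intro h t
      rw [key t]
      have h1 : (fun s => C * A ^ i * ((DA A)^[j] F s)) = fun _ => 0 := by
        funext s; exact (ih i).1 (by omega) s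
      rw [h1, matDeriv_zero_fun, (ih (i+1)).2 (by omega) t]
      rw [zero_sub, ← neg_smul]
      congr 1
      ring

/-- anti-block-triangular matrices with invertible antidiagonal blocks are invertible -/
lemma antitri_isUnit {r p : ℕ} (M : Matrix (Fin r × Fin p) (Fin r × Fin p) ℝ)
    (hzero : ∀ i j : Fin r, (i:ℕ) + (j:ℕ) + 2 ≤ r → ∀ a b, M (i,a) (j,b) = 0)
    (hdiag : ∀ i j : Fin r, (i:ℕ) + (j:ℕ) + 1 = r →
      IsUnit (Matrix.of fun a b => M (i,a) (j,b))) : IsUnit M := by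
  rw [Matrix.isUnit_iff_isUnit_det, isUnit_iff_ne_zero]
  intro hdet
  obtain ⟨v, hv0, hv⟩ := (Matrix.exists_mulVec_eq_zero_iff).mpr hdet
  apply hv0
  have claim : ∀ d : ℕ, ∀ j : Fin r, r - 1 - (j:ℕ) ≤ d → ∀ b, v (j, b) = 0 := by
    intro d
    induction d using Nat.strong_induction_on with
    | _ d ih =>
      intro j hj b
      -- the row block index
      have hjr : (j:ℕ) < r := j.2
      set i : Fin r := ⟨r - 1 - (j:ℕ), by omega⟩ with hi
      -- block equation
      have row : ∀ a : Fin p, ∑ j' : Fin r, ∑ b' : Fin p, M (i,a) (j',b') * v (j',b') = 0 := by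
        intro a
        have := congrFun hv (i, a)
        simpa [Matrix.mulVec, dotProduct, Fintype.sum_prod_type] using this
      have later : ∀ j' : Fin r, (j:ℕ) < (j':ℕ) → ∀ b', v (j', b') = 0 := by
        intro j' hjj' b'
        exact ih (r - 1 - (j':ℕ)) (by omega) j' le_rfl b'
      have row2 : ∀ a : Fin p, ∑ b' : Fin p, M (i,a) (j,b') * v (j,b') = 0 := by
        intro a
        rw [← row a, eq_comm]
        rw [← Finset.sum_subset (Finset.subset_univ {j})]
        · simp
        · intro j' _ hj'
          simp only [Finset.mem_singleton] at hj'
          rcases lt_trichotomy (j':ℕ) (j:ℕ) with h | h | h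
          · apply Finset.sum_eq_zero; intro b' _
            rw [hzero i j' (by simp [hi]; omega) _ b', zero_mul]
          · exact absurd (Fin.ext h) hj'
          · apply Finset.sum_eq_zero; intro b' _
            rw [later j' h b', mul_zero]
      -- invertible block
      have hN := hdiag i j (by simp [hi]; omega)
      have : (Matrix.of fun a b => M (i,a) (j,b)) *ᵥ (fun b' => v (j, b')) = 0 := by
        funext a
        simpa [Matrix.mulVec, dotProduct] using row2 a
      have h2 : (fun b' => v (j, b')) = 0 := by
        have hNdet : IsUnit (Matrix.of fun a b => M (i,a) (j,b)).det :=
          (Matrix.isUnit_iff_isUnit_det _).mp hN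
        have := congrArg (fun w => (Matrix.of fun a b => M (i,a) (j,b))⁻¹ *ᵥ w) this
        simpa [Matrix.mulVec_mulVec, Matrix.nonsing_inv_mul _ hNdet] using this
      exact congrFun h2 b
  funext ⟨j, b⟩
  exact claim (r - 1 - (j:ℕ)) j le_rfl b

lemma isUnit_smul_unit {p : ℕ} (c : ℝ) (hc : c ≠ 0) (N : Matrix (Fin p) (Fin p) ℝ)
    (hN : IsUnit N) : IsUnit (c • N) := by
  have hNdet : IsUnit N.det := (Matrix.isUnit_iff_isUnit_det _).mp hN
  refine ⟨⟨c • N, c⁻¹ • N⁻¹, ?_, ?_⟩, rfl⟩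
  · rw [smul_mul_assoc, mul_smul_comm, smul_smul, mul_inv_cancel₀ hc,
      Matrix.mul_nonsing_inv _ hNdet, one_smul]
  · rw [smul_mul_assoc, mul_smul_comm, smul_smul, inv_mul_cancel₀ hc,
      Matrix.nonsing_inv_mul _ hNdet, one_smul]

/-- Leibniz: matDeriv of a product -/
lemma matDeriv_mul {a b c : ℕ} (M : ℝ → Matrix (Fin a) (Fin b) ℝ)
    (N : ℝ → Matrix (Fin b) (Fin c) ℝ) (t : ℝ)
    (hM : ∀ i j, DifferentiableAt ℝ (fun t => M t i j) t)
    (hN : ∀ i j, DifferentiableAt ℝ (fun t => N t i j) t) :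
    matDeriv (fun s => M s * N s) t = matDeriv M t * N t + M t * matDeriv N t := by
  ext i j
  simp only [matDeriv_apply, Matrix.add_apply, Matrix.mul_apply]
  rw [deriv_fun_sum (fun x _ => ((hM i x).fun_mul (hN x j)))]
  rw [← Finset.sum_add_distrib]
  congr 1; funext x
  rw [deriv_fun_mul (hM i x) (hN x j)]

lemma matDeriv_sum {a b : ℕ} (k : ℕ) (f : ℕ → ℝ → Matrix (Fin a) (Fin b) ℝ) (t : ℝ)
    (hf : ∀ l i j, DifferentiableAt ℝ (fun s => f l s i j) t) :
    matDeriv (fun s => ∑ l ∈ Finset.range k, f l s) t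
      = ∑ l ∈ Finset.range k, matDeriv (f l) t := by
  ext i j
  simp only [matDeriv_apply, Matrix.sum_apply]
  rw [deriv_fun_sum (fun l _ => hf l i j)]

/-- Leibniz representation of DA-iterates of a product -/
lemma rep {n m p : ℕ} (A : Matrix (Fin n) (Fin n) ℝ)
    (W : ℝ → Matrix (Fin n) (Fin p) ℝ) (R : ℝ → Matrix (Fin p) (Fin m) ℝ)
    (hW : ∀ i j, ContDiff ℝ SM fun t => W t i j)
    (hR : ∀ i j, ContDiff ℝ SM fun t => R t i j) (j : ℕ) :
    ∃ E : ℕ → ℝ → Matrix (Fin p) (Fin m) ℝ,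
      (∀ l i q, ContDiff ℝ SM fun t => E l t i q) ∧
      (∀ l, j < l → E l = fun _ => 0) ∧
      (∀ t, (DA A)^[j] (fun s => W s * R s) t
         = ∑ l ∈ Finset.range (j+1), (DA A)^[l] W t * E l t) := by
  induction j with
  | zero =>
    refine ⟨fun l => if l = 0 then R else fun _ => 0, ?_, ?_, ?_⟩
    · intro l i q
      rcases eq_or_ne l 0 with h | h
      · simpa [h] using hR i q
      · simp only [if_neg h]; exact contDiff_const
    · intro l hl
      have : l ≠ 0 := by omega
      simp [this]
    · intro t; simp
  | succ j ih =>
    obtain ⟨E, hsm, hsupp, hrepr⟩ := ih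
    have hEdiff : ∀ l i q (t : ℝ), DifferentiableAt ℝ (fun s => E l s i q) t := fun l i q t =>
      ((hsm l i q).differentiable (by simp)).differentiableAt
    refine ⟨fun l t => matDeriv (E l) t + (if l = 0 then 0 else E (l-1) t), ?_, ?_, ?_⟩
    · intro l i q
      rcases eq_or_ne l 0 with h | h
      · simpa [h, matDeriv_apply] using (contDiff_infty_iff_deriv.mp (hsm 0 i q)).2
      · simp only [h, if_neg h, Matrix.add_apply, matDeriv_apply]
        exact ((contDiff_infty_iff_deriv.mp (hsm l i q)).2).add (hsm (l-1) i q)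
    · intro l hl
      funext t
      have h0 : l ≠ 0 := by omega
      show matDeriv (E l) t + (if l = 0 then 0 else E (l-1) t) = 0
      rw [hsupp l (by omega), if_neg h0, hsupp (l-1) (by omega), matDeriv_zero_fun]
      simp
    · intro t
      rw [Function.iterate_succ_apply']
      have hfun : (DA A)^[j] (fun s => W s * R s)
          = fun s => ∑ l ∈ Finset.range (j+1), (DA A)^[l] W s * E l s := funext hrepr
      show matDeriv ((DA A)^[j] fun s => W s * R s) t - A * ((DA A)^[j] (fun s => W s * R s) t) = _
      rw [hfun]
      rw [matDeriv_sum _ _ t (fun l i q => by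
        have : (fun s => ((DA A)^[l] W s * E l s) i q)
            = fun s => ∑ x, ((DA A)^[l] W s) i x * E l s x q := by
          funext s; simp [Matrix.mul_apply]
        rw [this]
        exact DifferentiableAt.fun_sum fun x _ => (diffAt_DA_iter A W hW l i x t).mul (hEdiff l x q t))]
      have hterm : ∀ l, matDeriv (fun s => (DA A)^[l] W s * E l s) t
          = ((DA A)^[l+1] W t + A * (DA A)^[l] W t) * E l t + (DA A)^[l] W t * matDeriv (E l) t := by
        intro l
        rw [matDeriv_mul _ _ t (fun i q => diffAt_DA_iter A W hW l i q t) (fun i q => hEdiff l i q t)]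
        have h2 : (DA A)^[l+1] W t + A * (DA A)^[l] W t = matDeriv ((DA A)^[l] W) t := by
          rw [Function.iterate_succ_apply']
          show matDeriv ((DA A)^[l] W) t - A * ((DA A)^[l] W t) + A * ((DA A)^[l] W t) = _
          abel
        rw [h2]
      -- rewrite each term and cancel
      beta_reduce
      rw [Finset.sum_congr rfl (fun l _ => hterm l), Matrix.mul_sum]
      have expand : ∑ l ∈ Finset.range (j+1),
            (((DA A)^[l+1] W t + A * (DA A)^[l] W t) * E l t + (DA A)^[l] W t * matDeriv (E l) t)
          - ∑ l ∈ Finset.range (j+1), A * ((DA A)^[l] W t * E l t)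
          = ∑ l ∈ Finset.range (j+1),
            ((DA A)^[l+1] W t * E l t + (DA A)^[l] W t * matDeriv (E l) t) := by
        rw [← Finset.sum_sub_distrib]
        congr 1; funext l
        rw [Matrix.add_mul, Matrix.mul_assoc]
        abel
      rw [expand]
      -- now compute the RHS
      have rhs : ∑ l ∈ Finset.range (j+2), (DA A)^[l] W t *
            (matDeriv (E l) t + (if l = 0 then 0 else E (l-1) t))
          = ∑ l ∈ Finset.range (j+1),
            ((DA A)^[l+1] W t * E l t + (DA A)^[l] W t * matDeriv (E l) t) := by
        simp only [Matrix.mul_add]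
        rw [Finset.sum_add_distrib, Finset.sum_add_distrib, add_comm]
        congr 1
        · rw [Finset.sum_range_succ']
          simp
        · rw [Finset.sum_range_succ, hsupp (j+1) (by omega), matDeriv_zero_fun, Matrix.mul_zero,
            add_zero]
      rw [rhs]

lemma isUnit_mul_transpose {α β : Type*} [Fintype α] [Fintype β] [DecidableEq α]
    (M : Matrix α β ℝ) (S : Matrix β α ℝ) (h : M * S = 1) : IsUnit (M * Mᵀ) := by
  rw [Matrix.isUnit_iff_isUnit_det, isUnit_iff_ne_zero]
  intro hdet
  obtain ⟨v, hv0, hv⟩ := Matrix.exists_mulVec_eq_zero_iff.mpr hdet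
  apply hv0
  have hw : Mᵀ *ᵥ v = 0 := by
    have h1 : (Mᵀ *ᵥ v) ⬝ᵥ (Mᵀ *ᵥ v) = 0 := by
      have h2 : v ⬝ᵥ ((M * Mᵀ) *ᵥ v) = 0 := by rw [hv, dotProduct_zero]
      rwa [← Matrix.mulVec_mulVec, Matrix.dotProduct_mulVec, ← Matrix.mulVec_transpose] at h2
    exact dotProduct_self_eq_zero.mp h1
  calc v = (M * S)ᵀ *ᵥ v := by rw [h, Matrix.transpose_one, Matrix.one_mulVec]
  _ = Sᵀ *ᵥ (Mᵀ *ᵥ v) := by rw [Matrix.transpose_mul, Matrix.mulVec_mulVec]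
  _ = 0 := by rw [hw, Matrix.mulVec_zero]


lemma calC_mul_calB {n m p r : ℕ} (A : Matrix (Fin n) (Fin n) ℝ) (C : Matrix (Fin p) (Fin n) ℝ)
    (X : ℝ → Matrix (Fin n) (Fin m) ℝ) (t : ℝ) (i : Fin r) (j : Fin r) (a : Fin p) (b : Fin m) :
    (calC r A C * calB r A X t) (i,a) (j,b)
      = (C * A ^ (i:ℕ) * ((DA A)^[(j:ℕ)] X t)) a b := by
  simp [Matrix.mul_apply, calC, calB]

lemma pseudo_alg {α β γ : Type*} [Fintype α] [Fintype β] [Fintype γ] [DecidableEq β]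
    (B : Matrix α γ ℝ) (Cc : Matrix β α ℝ) (N : Matrix α β ℝ)
    (hB : B = N * (Cc * B)) (hU : IsUnit (Cc * B * (Cc * B)ᵀ)) :
    B * ((Cc * B)ᵀ * (Cc * B * (Cc * B)ᵀ)⁻¹) * Cc * B = B := by
  have hdet : IsUnit (Cc * B * (Cc * B)ᵀ).det := (Matrix.isUnit_iff_isUnit_det _).mp hU
  rw [Matrix.mul_assoc (B * ((Cc * B)ᵀ * (Cc * B * (Cc * B)ᵀ)⁻¹))]
  set M := Cc * B with hM
  have key : M * (Mᵀ * ((M * Mᵀ)⁻¹ * M)) = M := by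
    rw [← Matrix.mul_assoc Mᵀ, ← Matrix.mul_assoc M, ← Matrix.mul_assoc M,
      Matrix.mul_nonsing_inv _ hdet, Matrix.one_mul]
  rw [hB]
  simp only [Matrix.mul_assoc]
  rw [key]

theorem stmt8 (n m p r : ℕ) (hr : 1 ≤ r)
    (A : Matrix (Fin n) (Fin n) ℝ) (C : Matrix (Fin p) (Fin n) ℝ)
    (W : ℝ → Matrix (Fin n) (Fin p) ℝ) (R₁ : ℝ → Matrix (Fin m) (Fin p) ℝ)
    (hW : ∀ i j, ContDiff ℝ (⊤ : ℕ∞) fun t => W t i j)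
    (hR : ∀ i j, ContDiff ℝ (⊤ : ℕ∞) fun t => R₁ t i j)
    (horth : ∀ t : ℝ, (R₁ t)ᵀ * R₁ t = 1)
    (hCW : ∀ k : ℕ, k + 2 ≤ r → ∀ t : ℝ, C * A ^ k * W t = 0)
    (hinv : ∀ t : ℝ, IsUnit (C * A ^ (r - 1) * W t)) :
    ∀ t : ℝ,
      let B : Matrix (Fin n) (Fin r × Fin m) ℝ := calB r A (fun s => W s * (R₁ s)ᵀ) t
      let Cc : Matrix (Fin r × Fin p) (Fin n) ℝ := calC r A C
      IsUnit (Cc * B * (Cc * B)ᵀ) ∧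
      B * ((Cc * B)ᵀ * (Cc * B * (Cc * B)ᵀ)⁻¹) * Cc * B = B := by
  intro t
  set G : ℝ → Matrix (Fin n) (Fin m) ℝ := fun s => W s * (R₁ s)ᵀ with hGdef
  intro B Cc
  -- smoothness
  have hW' : ∀ i j, ContDiff ℝ SM fun t => W t i j := fun i j => (hW i j).of_le (by simp)
  have hRT : ∀ (i : Fin p) (j : Fin m), ContDiff ℝ SM fun t => (R₁ t)ᵀ i j := fun i j =>
    ((hR j i).of_le (by simp))
  have hG : ∀ i j, ContDiff ℝ SM fun t => G t i j := by
    intro i j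
    have : (fun t => G t i j) = fun t => ∑ x, W t i x * (R₁ t)ᵀ x j := by
      funext s; simp [hGdef, Matrix.mul_apply]
    rw [this]
    exact ContDiff.sum fun x _ => (hW' i x).mul (hRT x j)
  -- C A^k G = 0
  have hCG : ∀ k : ℕ, k + 2 ≤ r → ∀ s : ℝ, C * A ^ k * G s = 0 := by
    intro k hk s
    show C * A ^ k * (W s * (R₁ s)ᵀ) = 0
    rw [← Matrix.mul_assoc, hCW k hk s, Matrix.zero_mul]
  have PQW := PQ A C W hW' hCW
  have PQG := PQ A C G hG hCG
  -- K = 𝒞 * 𝔅_W is invertible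
  set BW : Matrix (Fin n) (Fin r × Fin p) ℝ := calB r A W t with hBW
  set K : Matrix (Fin r × Fin p) (Fin r × Fin p) ℝ := calC r A C * BW with hK
  have hKunit : IsUnit K := by
    apply antitri_isUnit
    · intro i j hij a b
      rw [hK, hBW, calC_mul_calB, (PQW (j:ℕ) (i:ℕ)).1 (by omega) t, Matrix.zero_apply]
    · intro i j hij
      have : (Matrix.of fun a b => K ((i,a)) ((j,b)))
          = ((-1:ℝ)^(j:ℕ)) • (C * A ^ (r-1) * W t) := by
        ext a b
        show K (i,a) (j,b) = _
        rw [hK, hBW, calC_mul_calB, (PQW (j:ℕ) (i:ℕ)).2 (by omega) t]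
      rw [this]
      exact isUnit_smul_unit _ (by positivity) _ (hinv t)
  have hKdet : IsUnit K.det := (Matrix.isUnit_iff_isUnit_det _).mp hKunit
  -- the block diagonal matrix Dg and V := 𝒞 B Dg
  set Dg : Matrix (Fin r × Fin m) (Fin r × Fin p) ℝ :=
    Matrix.of (fun jb ja => if jb.1 = ja.1 then R₁ t jb.2 ja.2 else 0) with hDg
  set V : Matrix (Fin r × Fin p) (Fin r × Fin p) ℝ := calC r A C * calB r A G t * Dg with hV
  have hVapp : ∀ (i j : Fin r) (a b : Fin p),
      V (i,a) (j,b) = ((C * A ^ (i:ℕ) * ((DA A)^[(j:ℕ)] G t)) * R₁ t) a b := by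
    intro i j a b
    rw [hV, Matrix.mul_apply]
    rw [show ((C * A ^ (i:ℕ) * ((DA A)^[(j:ℕ)] G t)) * R₁ t) a b
      = ∑ c, (C * A ^ (i:ℕ) * ((DA A)^[(j:ℕ)] G t)) a c * R₁ t c b from Matrix.mul_apply]
    rw [Fintype.sum_prod_type]
    rw [Finset.sum_eq_single j]
    · apply Finset.sum_congr rfl
      intro c _
      rw [calC_mul_calB A C G t i j a c]
      simp [hDg]
    · intro j' _ hj'
      apply Finset.sum_eq_zero; intro c _
      simp [hDg, hj']
    · simp
  have hVunit : IsUnit V := by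
    apply antitri_isUnit
    · intro i j hij a b
      rw [hVapp i j a b, (PQG (j:ℕ) (i:ℕ)).1 (by omega) t, Matrix.zero_mul, Matrix.zero_apply]
    · intro i j hij
      have : (Matrix.of fun a b => V ((i,a)) ((j,b)))
          = ((-1:ℝ)^(j:ℕ)) • (C * A ^ (r-1) * W t) := by
        ext a b
        show V (i,a) (j,b) = _
        have hmat : C * A ^ (r-1) * G t * R₁ t = C * A ^ (r-1) * W t := by
          show C * A ^ (r-1) * (W t * (R₁ t)ᵀ) * R₁ t = _
          rw [Matrix.mul_assoc (C * A ^ (r-1)), Matrix.mul_assoc (W t), horth t, Matrix.mul_one]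
        rw [hVapp i j a b, (PQG (j:ℕ) (i:ℕ)).2 (by omega) t, Matrix.smul_mul, hmat]
      rw [this]
      exact isUnit_smul_unit _ (by positivity) _ (hinv t)
  have hVdet : IsUnit V.det := (Matrix.isUnit_iff_isUnit_det _).mp hVunit
  have hRight : calC r A C * calB r A G t * (Dg * V⁻¹) = 1 := by
    rw [← Matrix.mul_assoc, ← hV, Matrix.mul_nonsing_inv _ hVdet]
  -- representation B = BW * T
  have hrep : ∀ j : Fin r, ∃ E : ℕ → ℝ → Matrix (Fin p) (Fin m) ℝ,
      (∀ l i q, ContDiff ℝ SM fun t => E l t i q) ∧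
      (∀ l, (j:ℕ) < l → E l = fun _ => 0) ∧
      (∀ s, (DA A)^[(j:ℕ)] G s = ∑ l ∈ Finset.range ((j:ℕ)+1), (DA A)^[l] W s * E l s) :=
    fun j => rep A W (fun s => (R₁ s)ᵀ) hW' hRT (j:ℕ)
  choose E hEsm hEsupp hErepr using hrep
  set T : Matrix (Fin r × Fin p) (Fin r × Fin m) ℝ :=
    Matrix.of (fun la jb => E jb.1 ((la.1 : Fin r):ℕ) t la.2 jb.2) with hT
  have hBT : calB r A G t = BW * T := by
    ext i jb
    obtain ⟨j, b⟩ := jb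
    have h1 : (BW * T) i (j,b) = ∑ l ∈ Finset.range r, ((DA A)^[l] W t * E j l t) i b := by
      rw [Matrix.mul_apply, Fintype.sum_prod_type,
        ← Fin.sum_univ_eq_sum_range (fun l => ((DA A)^[l] W t * E j l t) i b) r]
      apply Finset.sum_congr rfl
      intro l _
      rw [Matrix.mul_apply]
      apply Finset.sum_congr rfl
      intro a _
      rw [hBW, hT]
      rfl
    show ((DA A)^[(j:ℕ)] G t) i b = (BW * T) i (j,b)
    rw [h1, hErepr j t, Matrix.sum_apply]
    apply Finset.sum_subset (Finset.range_subset_range.mpr (by omega : (j:ℕ)+1 ≤ r))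
    intro l hl hnot
    rw [hEsupp j l (by simp only [Finset.mem_range] at hnot ⊢; omega)]
    simp
  have hfact : calB r A G t = (BW * K⁻¹) * (calC r A C * calB r A G t) := by
    rw [hBT, ← Matrix.mul_assoc (calC r A C) BW T, ← hK,
      Matrix.mul_assoc BW K⁻¹ (K * T),
      ← Matrix.mul_assoc K⁻¹ K T, Matrix.nonsing_inv_mul _ hKdet, Matrix.one_mul]
  exact ⟨isUnit_mul_transpose _ _ hRight,
    pseudo_alg (calB r A G t) (calC r A C) (BW * K⁻¹) hfact (isUnit_mul_transpose _ _ hRight)⟩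
end
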